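/- arXiv:2512.25017 — 3 statements merged into one kernel-verified Lean document; each statement's English description precedes it below -/
import Mathlib

section
/- Let (wₘ) be a sequence in a Hilbert space H and w* the unique minimizer of the functional I(u) = M(u) + G(u), where M(u) = (1/2)|u|² + (h/2)B(u,u) satisfies M(u) ≥ c‖u‖² for c = hλ₁/2 > 0 (plus a nonnegative |·|² term), G is continuous affine, and I is weakly lower semicontinuous and locally Lipschitz. Then ‖wₘ − w*‖ → 0 if and only if I(wₘ) → I(w*). -/
open Filter

/-- Norm convergence to the unique minimizer of the energy functional is equivalent
to convergence of the energy values. -/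
theorem norm_convergence_iff_energy_convergence {H : Type*} [NormedAddCommGroup H]
    [InnerProductSpace ℝ H] [CompleteSpace H]
    (B ip : H →L[ℝ] H →L[ℝ] ℝ) (h lam1 lam2 : ℝ)
    (hh : 0 < h) (hlam1 : 0 < lam1) (hlam2 : 0 ≤ lam2) (hsmall : h * lam2 < 1 / 2)
    (hBsymm : ∀ u v, B u v = B v u)
    (hipsymm : ∀ u v, ip u v = ip v u)
    (hip0 : ∀ u, 0 ≤ ip u u)
    (hiple : ∀ u, ip u u ≤ ‖u‖ ^ 2)
    (hCS : ∀ u v, |ip u v| ≤ Real.sqrt (ip u u) * Real.sqrt (ip v v))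
    (hGarding : ∀ u, lam1 * ‖u‖ ^ 2 - lam2 * ip u u ≤ B u u)
    (G : H → ℝ) (L : H →L[ℝ] ℝ) (cG : ℝ) (hG : ∀ u, G u = L u + cG)
    (I : H → ℝ)
    (hI : ∀ u, I u = (1 / 2) * ip u u + (h / 2) * B u u + G u)
    (wstar : H) (hmin : ∀ v : H, I wstar ≤ I v)
    (huniq : ∀ u : H, (∀ v : H, I u ≤ I v) → u = wstar)
    (w : ℕ → H) :
    Tendsto (fun m => ‖w m - wstar‖) atTop (nhds 0)
      ↔ Tendsto (fun m => I (w m)) atTop (nhds (I wstar)) := by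
  -- quadratic part lower bound
  have Qnn : ∀ v : H, h * lam1 / 2 * ‖v‖ ^ 2 ≤ (1/2) * ip v v + (h/2) * B v v := by
    intro v
    have hg := hGarding v
    have h0 := hip0 v
    nlinarith [sq_nonneg ‖v‖, mul_nonneg hh.le hlam2]
  -- expansion of I around wstar
  have expand : ∀ v : H, I (wstar + v)
      = I wstar + (ip wstar v + h * B wstar v + L v)
        + ((1/2) * ip v v + (h/2) * B v v) := by
    intro v
    have e1 : ip (wstar + v) (wstar + v)
        = ip wstar wstar + 2 * ip wstar v + ip v v := by
      simp [map_add, ContinuousLinearMap.add_apply, hipsymm v wstar]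
      ring
    have e2 : B (wstar + v) (wstar + v)
        = B wstar wstar + 2 * B wstar v + B v v := by
      simp [map_add, ContinuousLinearMap.add_apply, hBsymm v wstar]
      ring
    rw [hI, hI, e1, e2, hG, hG, map_add]
    ring
  -- the linear term vanishes
  have lzero : ∀ v : H, ip wstar v + h * B wstar v + L v = 0 := by
    intro v
    obtain ⟨a, ha⟩ : ∃ a, a = ip wstar v + h * B wstar v + L v := ⟨_, rfl⟩
    obtain ⟨q, hq⟩ : ∃ q, q = (1/2) * ip v v + (h/2) * B v v := ⟨_, rfl⟩
    rw [← ha]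
    have hq0 : 0 ≤ q := hq ▸ le_trans (by positivity) (Qnn v)
    have key : ∀ t : ℝ, 0 ≤ t * a + t ^ 2 * q := by
      intro t
      have := hmin (wstar + t • v)
      have e := expand (t • v)
      have s1 : ip wstar (t • v) = t * ip wstar v := by simp
      have s2 : B wstar (t • v) = t * B wstar v := by simp
      have s3 : L (t • v) = t * L v := by simp
      have s4 : ip (t • v) (t • v) = t ^ 2 * ip v v := by
        simp [map_smul]; ring
      have s5 : B (t • v) (t • v) = t ^ 2 * B v v := by
        simp [map_smul]; ring
      rw [e, s1, s2, s3, s4, s5] at this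
      rw [ha, hq]
      nlinarith [this]
    have h2q : (0:ℝ) < 2 * q + 1 := by linarith
    have hpos : (0:ℝ) < (2 * q + 1) ^ 2 := by positivity
    have hk := key (-(a / (2 * q + 1)))
    have e : -(a / (2 * q + 1)) * a + (-(a / (2 * q + 1))) ^ 2 * q
        = -(a ^ 2 * (q + 1)) / (2 * q + 1) ^ 2 := by
      field_simp
      ring
    rw [e] at hk
    have h3 : (0:ℝ) ≤ -(a ^ 2 * (q + 1)) := by
      have := mul_nonneg hk hpos.le
      rwa [div_mul_cancel₀ _ (ne_of_gt hpos)] at this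
    have h4 : a ^ 2 = 0 := by nlinarith [sq_nonneg a, mul_nonneg (sq_nonneg a) hq0]
    exact pow_eq_zero_iff (two_ne_zero) |>.mp h4
  -- coercivity inequality
  have keyineq : ∀ u : H, h * lam1 / 2 * ‖u - wstar‖ ^ 2 ≤ I u - I wstar := by
    intro u
    have e := expand (u - wstar)
    rw [add_sub_cancel] at e
    rw [e, lzero (u - wstar)]
    have := Qnn (u - wstar)
    linarith
  constructor
  · -- forward: norm convergence ⇒ energy convergence, by continuity of I
    intro hnorm
    have hw : Tendsto w atTop (nhds wstar) := by
      rw [tendsto_iff_norm_sub_tendsto_zero]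
      exact hnorm
    have hcont : Continuous I := by
      have h1 : Continuous fun u : H => ip u u :=
        ip.continuous₂.comp (continuous_id.prodMk continuous_id)
      have h2 : Continuous fun u : H => B u u :=
        B.continuous₂.comp (continuous_id.prodMk continuous_id)
      have h3 : Continuous fun u : H => (1/2) * ip u u + (h/2) * B u u + (L u + cG) := by
        exact ((continuous_const.mul h1).add (continuous_const.mul h2)).add
          (L.continuous.add continuous_const)
      have : I = fun u : H => (1/2) * ip u u + (h/2) * B u u + (L u + cG) := by
        funext u; rw [hI, hG]
      rw [this]; exact h3
    exact (hcont.tendsto wstar).comp hw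
  · -- reverse: energy convergence ⇒ norm convergence
    intro hI'
    have hdiff : Tendsto (fun m => I (w m) - I wstar) atTop (nhds 0) := by
      have := hI'.sub (tendsto_const_nhds :
        Tendsto (fun _ : ℕ => I wstar) atTop (nhds (I wstar)))
      rwa [sub_self] at this
    have hc : (0:ℝ) < h * lam1 / 2 := by positivity
    have hsq : Tendsto (fun m => ‖w m - wstar‖ ^ 2) atTop (nhds 0) := by
      have hb : Tendsto (fun m => (I (w m) - I wstar) / (h * lam1 / 2)) atTop (nhds 0) := by
        have := hdiff.div_const (h * lam1 / 2)
        rwa [zero_div] at this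
      refine squeeze_zero (fun m => sq_nonneg _) (fun m => ?_) hb
      rw [le_div_iff₀ hc]
      have := keyineq (w m)
      nlinarith
    have hcomp := (Real.continuous_sqrt.tendsto 0).comp hsq
    rw [Real.sqrt_zero] at hcomp
    refine hcomp.congr fun m => ?_
    simp [Function.comp, Real.sqrt_sq (norm_nonneg _)]
end

section
/- Let ψ ∈ C_c^∞(ℝᵈ) with ∫ ψ ≠ 0, and let C(ψ) = { x ↦ Σ_{i=1}^n βᵢ ψ(αᵢ x + cᵢ) : n ∈ ℕ, βᵢ ∈ ℝ, αᵢ ∈ ℝ \ {0}, cᵢ ∈ ℝᵈ } (with αᵢ x meaning scalar times vector). If g : ℝᵈ → ℝ is continuous and ∫_{ℝᵈ} ζ(x) g(x) dx = 0 for every ζ ∈ C(ψ), then g ≡ 0. -/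
open MeasureTheory

/-- If a continuous function `g` annihilates (in `L²` pairing) every single-hidden-layer
neural network built from a compactly supported smooth activation `ψ` with `∫ψ ≠ 0`,
then `g ≡ 0`. -/
theorem annihilated_by_networks_eq_zero {d : ℕ}
    (ψ g : EuclideanSpace ℝ (Fin d) → ℝ)
    (hψ : ContDiff ℝ (⊤ : ℕ∞) ψ) (hψc : HasCompactSupport ψ)
    (hc : (∫ x, ψ x) ≠ 0) (hg : Continuous g)
    (hz : ∀ (n : ℕ) (β α : Fin n → ℝ) (c : Fin n → EuclideanSpace ℝ (Fin d)),
      (∀ i, α i ≠ 0) →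
      ∫ x, (∑ i, β i * ψ (α i • x + c i)) * g x = 0) :
    ∀ x, g x = 0 := by
  intro x
  have hψcont : Continuous ψ := hψ.continuous
  have hψint : Integrable ψ := hψcont.integrable_of_hasCompactSupport hψc
  set F : ℝ → ℝ := fun ε => ∫ u, ψ u * g (x + ε • u) with hF
  -- Step 1: F ε = 0 for all ε > 0
  have hFzero : ∀ ε : ℝ, 0 < ε → F ε = 0 := by
    intro ε hε
    have hεne : (ε : ℝ) ≠ 0 := hε.ne'
    have h1 := hz 1 (fun _ => (ε⁻¹) ^ d) (fun _ => ε⁻¹) (fun _ => -(ε⁻¹ • x))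
      (fun _ => inv_ne_zero hεne)
    simp only [Fin.sum_univ_one] at h1
    have key : ∀ y : EuclideanSpace ℝ (Fin d),
        (ε⁻¹ ^ d * ψ (ε⁻¹ • y + -(ε⁻¹ • x))) * g y
          = ε⁻¹ ^ d * ((fun z => ψ (ε⁻¹ • z) * g (x + z)) (y - x)) := by
      intro y
      have e1 : ε⁻¹ • y + -(ε⁻¹ • x) = ε⁻¹ • (y - x) := by rw [smul_sub]; abel
      have e2 : x + (y - x) = y := by abel
      simp only [e1, mul_assoc, e2]
    rw [show (fun y => (ε⁻¹ ^ d * ψ (ε⁻¹ • y + -(ε⁻¹ • x))) * g y)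
        = fun y => ε⁻¹ ^ d * ((fun z => ψ (ε⁻¹ • z) * g (x + z)) (y - x)) from funext key,
      integral_const_mul, integral_sub_right_eq_self (fun z => ψ (ε⁻¹ • z) * g (x + z)) x] at h1
    have h2 : (fun z => ψ (ε⁻¹ • z) * g (x + z))
        = fun z => (fun u => ψ u * g (x + ε • u)) (ε⁻¹ • z) := by
      funext z
      simp only [smul_smul, mul_inv_cancel₀ hεne, one_smul]
    rw [h2, Measure.integral_comp_inv_smul volume (fun u => ψ u * g (x + ε • u)) ε] at h1
    rw [finrank_euclideanSpace_fin, abs_of_pos (pow_pos hε d), smul_eq_mul] at h1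
    have hεd : (ε⁻¹ : ℝ) ^ d * ε ^ d ≠ 0 := by positivity
    have := mul_eq_zero.1 h1
    rcases this with h | h
    · exact absurd h (by positivity)
    · rcases mul_eq_zero.1 h with h' | h'
      · exact absurd h' (by positivity)
      · exact h'
  -- Step 2: F ε → (∫ψ) * g x as ε → 0⁺
  have hK : IsCompact ((fun p : ℝ × EuclideanSpace ℝ (Fin d) => x + p.1 • p.2) ''
      (Set.Icc (0:ℝ) 1 ×ˢ tsupport ψ)) :=
    (isCompact_Icc.prod hψc).image (by fun_prop)
  obtain ⟨M, hM⟩ := hK.exists_bound_of_continuousOn hg.continuousOn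
  have htend : Filter.Tendsto F (nhdsWithin 0 (Set.Ioi 0)) (nhds (∫ u, ψ u * g x)) := by
    apply tendsto_integral_filter_of_dominated_convergence (fun u => ‖ψ u‖ * M)
    · filter_upwards with ε
      exact (hψcont.mul (hg.comp (by fun_prop))).aestronglyMeasurable
    · filter_upwards [Ioc_mem_nhdsGT_of_mem (Set.left_mem_Ico.2 zero_lt_one)] with ε hε
      filter_upwards with u
      by_cases hu : u ∈ tsupport ψ
      · have hmem : x + ε • u ∈ (fun p : ℝ × EuclideanSpace ℝ (Fin d) => x + p.1 • p.2) ''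
            (Set.Icc (0:ℝ) 1 ×ˢ tsupport ψ) := ⟨(ε, u), ⟨⟨hε.1.le, hε.2⟩, hu⟩, rfl⟩
        calc ‖ψ u * g (x + ε • u)‖ = ‖ψ u‖ * ‖g (x + ε • u)‖ := norm_mul _ _
          _ ≤ ‖ψ u‖ * M := by
              exact mul_le_mul_of_nonneg_left (hM _ hmem) (norm_nonneg _)
      · simp [image_eq_zero_of_notMem_tsupport hu]
    · exact hψint.norm.mul_const M
    · filter_upwards with u
      have : Filter.Tendsto (fun ε : ℝ => ψ u * g (x + ε • u)) (nhds 0)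
          (nhds (ψ u * g (x + (0 : ℝ) • u))) := by
        exact (continuous_const.mul (hg.comp (continuous_const.add
          (continuous_id.smul continuous_const)))).tendsto 0
      simpa using this.mono_left nhdsWithin_le_nhds
  have hzero : Filter.Tendsto F (nhdsWithin 0 (Set.Ioi 0)) (nhds 0) := by
    apply Filter.Tendsto.congr' _ tendsto_const_nhds
    filter_upwards [self_mem_nhdsWithin] with ε (hε : ε ∈ Set.Ioi 0)
    exact (hFzero ε hε).symm
  have huniq : (∫ u, ψ u * g x) = 0 := tendsto_nhds_unique htend hzero
  rw [integral_mul_const] at huniq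
  exact (mul_eq_zero.1 huniq).resolve_left hc
end

section
/- Let β, α, c be the parameters of a single neuron, ψ ∈ C_c^∞(ℝᵈ), and let (β̂, α̂, ĉ) be the clipped parameters with |β̂| ≤ r, |ĉ| ≤ r, 1/r ≤ |α̂| ≤ r for a clipping level r ≥ 1. Define X^r(x) = ∇_{(β,α,c)} [β̂ ψ(α̂ x + ĉ)] (the gradient vector of the clipped neuron output with respect to the unclipped parameters). Then ‖X^r‖²_{H¹(ℝᵈ)} ≤ C_ψ r^{d+8} where C_ψ depends only on ψ and d. -/
open MeasureTheory RealInnerProductSpace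

/-- Clipping of a real parameter to `[-r, r]`. -/
noncomputable def clip (r x : ℝ) : ℝ := max (-r) (min r x)

/-- Clipping of the scale parameter `α` to `{1/r ≤ |α| ≤ r}`, preserving the sign. -/
noncomputable def clipA (r a : ℝ) : ℝ :=
  if 0 < a then max (1 / r) (min r a) else min (-(1 / r)) (max (-r) a)

/-- Componentwise clipping of the shift parameter `c ∈ ℝᵈ`. -/
noncomputable def clipC {d : ℕ} (r : ℝ) (c : EuclideanSpace ℝ (Fin d)) :
    EuclideanSpace ℝ (Fin d) := WithLp.toLp 2 (fun i => clip r (c i))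

/-- Squared `H¹(ℝᵈ)` norm of a scalar function. -/
noncomputable def H1sq {d : ℕ} (u : EuclideanSpace ℝ (Fin d) → ℝ) : ℝ :=
  (∫ x, (u x) ^ 2) + ∫ x, ‖fderiv ℝ u x‖ ^ 2

/-- Squared `H¹(ℝᵈ)` norm of a vector-valued function. -/
noncomputable def H1sqV {d : ℕ}
    (v : EuclideanSpace ℝ (Fin d) → EuclideanSpace ℝ (Fin d)) : ℝ :=
  (∫ x, ‖v x‖ ^ 2) + ∫ x, ‖fderiv ℝ v x‖ ^ 2

/-- `∂/∂β` component of the clipped-neuron gradient. -/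
noncomputable def Xbeta {d : ℕ} (ψ : EuclideanSpace ℝ (Fin d) → ℝ)
    (r β α : ℝ) (c : EuclideanSpace ℝ (Fin d))
    (x : EuclideanSpace ℝ (Fin d)) : ℝ :=
  (if |β| ≤ r then (1 : ℝ) else 0) * ψ (clipA r α • x + clipC r c)

/-- `∂/∂α` component of the clipped-neuron gradient. -/
noncomputable def Xalpha {d : ℕ} (ψ : EuclideanSpace ℝ (Fin d) → ℝ)
    (r β α : ℝ) (c : EuclideanSpace ℝ (Fin d))
    (x : EuclideanSpace ℝ (Fin d)) : ℝ :=
  (if 1 / r ≤ |α| ∧ |α| ≤ r then (1 : ℝ) else 0) * clip r β *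
    ⟪x, gradient ψ (clipA r α • x + clipC r c)⟫

/-- `∂/∂c` component of the clipped-neuron gradient. -/
noncomputable def Xc {d : ℕ} (ψ : EuclideanSpace ℝ (Fin d) → ℝ)
    (r β α : ℝ) (c : EuclideanSpace ℝ (Fin d))
    (x : EuclideanSpace ℝ (Fin d)) : EuclideanSpace ℝ (Fin d) :=
  WithLp.toLp 2 (fun i => (if |c i| ≤ r then (1 : ℝ) else 0) * clip r β *
    gradient ψ (clipA r α • x + clipC r c) i)

/-! ### Auxiliary lemmas -/

section Aux

open Set InnerProductSpace

variable {d : ℕ}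

lemma integral_sq_le_aux {F : Type*} [NormedAddCommGroup F]
    {f : EuclideanSpace ℝ (Fin d) → F} (hf : Continuous f)
    {K : Set (EuclideanSpace ℝ (Fin d))} (hK : IsCompact K)
    (hsupp : Function.support f ⊆ K) {B : ℝ}
    (hB : ∀ x ∈ K, ‖f x‖ ≤ B) :
    ∫ x, ‖f x‖ ^ 2 ≤ B ^ 2 * (volume K).toReal := by
  have hcs : HasCompactSupport (fun x => ‖f x‖ ^ 2) := by
    apply hK.of_isClosed_subset isClosed_closure
    apply closure_minimal _ hK.isClosed
    intro x hx
    simp only [Function.mem_support] at hx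
    apply hsupp
    simp only [Function.mem_support]
    intro h; apply hx; simp [h]
  have hint : Integrable (fun x => ‖f x‖ ^ 2) :=
    (hf.norm.pow 2).integrable_of_hasCompactSupport hcs
  have hind : Integrable (K.indicator (fun _ => B ^ 2)) := by
    rw [integrable_indicator_iff hK.measurableSet]
    exact integrableOn_const hK.measure_lt_top.ne
  have hmono : ∀ x, ‖f x‖ ^ 2 ≤ K.indicator (fun _ => B ^ 2) x := by
    intro x
    by_cases hx : x ∈ K
    · rw [indicator_of_mem hx]
      exact pow_le_pow_left₀ (norm_nonneg _) (hB x hx) 2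
    · rw [indicator_of_notMem hx]
      have : f x = 0 := by
        by_contra h
        exact hx (hsupp h)
      simp [this]
  calc ∫ x, ‖f x‖ ^ 2 ≤ ∫ x, K.indicator (fun _ => B ^ 2) x :=
        integral_mono hint hind hmono
    _ = B ^ 2 * (volume K).toReal := by
        rw [integral_indicator_const _ hK.measurableSet]; rw [smul_eq_mul, mul_comm]; rfl

lemma volume_preimage_affine {a : ℝ} (ha : a ≠ 0) (b : EuclideanSpace ℝ (Fin d))
    (K : Set (EuclideanSpace ℝ (Fin d))) :
    volume ((fun x => a • x + b) ⁻¹' K) = ENNReal.ofReal (|a|⁻¹ ^ d) * volume K := by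
  have h1 : (fun x : EuclideanSpace ℝ (Fin d) => a • x + b) ⁻¹' K
      = (a • ·) ⁻¹' ((· + b) ⁻¹' K) := rfl
  rw [h1, Measure.addHaar_preimage_smul volume ha, measure_preimage_add_right]
  congr 1
  rw [abs_inv, abs_pow]
  congr 1
  simp [finrank_euclideanSpace]

lemma abs_clip_le {r x : ℝ} (hr : 0 ≤ r) : |clip r x| ≤ r := by
  rw [abs_le, clip]
  constructor
  · exact le_max_left _ _
  · exact max_le (by linarith) (le_trans (min_le_left _ _) le_rfl)

lemma clipA_abs {r a : ℝ} (hr : 1 ≤ r) : 1 / r ≤ |clipA r a| ∧ |clipA r a| ≤ r := by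
  have hr0 : 0 < r := by linarith
  have h1r : 0 < 1 / r := by positivity
  have h1rr : 1 / r ≤ r := by
    rw [div_le_iff₀ hr0]; nlinarith
  rw [clipA]
  split_ifs with h
  · have hpos : 0 < max (1 / r) (min r a) := lt_of_lt_of_le h1r (le_max_left _ _)
    rw [abs_of_pos hpos]
    exact ⟨le_max_left _ _, max_le h1rr (min_le_left _ _)⟩
  · have hneg : min (-(1 / r)) (max (-r) a) ≤ -(1/r) := min_le_left _ _
    have hneg' : min (-(1 / r)) (max (-r) a) < 0 := by linarith
    rw [abs_of_neg hneg']
    constructor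
    · linarith
    · have : -r ≤ min (-(1 / r)) (max (-r) a) := le_min (by linarith) (le_max_left _ _)
      linarith

lemma norm_clipC_le {r : ℝ} (hr : 0 ≤ r) (c : EuclideanSpace ℝ (Fin d)) :
    ‖clipC r c‖ ≤ r * Real.sqrt d := by
  rw [EuclideanSpace.norm_eq]
  have h1 : ∑ i : Fin d, ‖clipC r c i‖ ^ 2 ≤ ∑ _i : Fin d, r ^ 2 := by
    apply Finset.sum_le_sum
    intro i _
    have := abs_clip_le (x := c i) hr
    rw [Real.norm_eq_abs]
    have h2 : |clipC r c i| = |clip r (c i)| := rfl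
    rw [h2]
    nlinarith [abs_nonneg (clip r (c i))]
  calc Real.sqrt (∑ i : Fin d, ‖clipC r c i‖ ^ 2) ≤ Real.sqrt (∑ _i : Fin d, r ^ 2) :=
        Real.sqrt_le_sqrt h1
    _ = r * Real.sqrt d := by
        rw [Finset.sum_const, Finset.card_univ, Fintype.card_fin, nsmul_eq_mul]
        rw [Real.sqrt_mul (by positivity), Real.sqrt_sq hr, mul_comm]

noncomputable def diagCLM (s : Fin d → ℝ) :
    EuclideanSpace ℝ (Fin d) →L[ℝ] EuclideanSpace ℝ (Fin d) :=
  LinearMap.toContinuousLinearMap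
    { toFun := fun y => (WithLp.toLp 2 (fun i => s i * y i) : EuclideanSpace ℝ (Fin d))
      map_add' := by
        intro y z; ext i
        simp [mul_add]
      map_smul' := by
        intro m y; ext i
        simp [PiLp.smul_apply, smul_eq_mul]; ring }

lemma diagCLM_apply (s : Fin d → ℝ) (y : EuclideanSpace ℝ (Fin d)) (i : Fin d) :
    diagCLM s y i = s i * y i := rfl

lemma diagCLM_norm_le {s : Fin d → ℝ} {r : ℝ} (hr : 0 ≤ r) (hs : ∀ i, |s i| ≤ r) :
    ‖diagCLM s‖ ≤ r := by
  apply ContinuousLinearMap.opNorm_le_bound _ hr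
  intro y
  rw [EuclideanSpace.norm_eq, EuclideanSpace.norm_eq]
  have h1 : ∑ i, ‖diagCLM s y i‖ ^ 2 ≤ ∑ i, r ^ 2 * ‖y i‖ ^ 2 := by
    apply Finset.sum_le_sum
    intro i _
    rw [diagCLM_apply, Real.norm_eq_abs, abs_mul]
    have := hs i
    have h2 : ‖y i‖ = |y i| := rfl
    rw [h2, mul_pow]
    exact mul_le_mul_of_nonneg_right (pow_le_pow_left₀ (abs_nonneg _) this 2) (by positivity)
  calc Real.sqrt (∑ i, ‖diagCLM s y i‖ ^ 2) ≤ Real.sqrt (∑ i, r ^ 2 * ‖y i‖ ^ 2) :=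
        Real.sqrt_le_sqrt h1
    _ = r * Real.sqrt (∑ i, ‖y i‖ ^ 2) := by
        rw [← Finset.mul_sum, Real.sqrt_mul (by positivity), Real.sqrt_sq hr]

lemma smul_clm_norm_le {E F : Type*} [NormedAddCommGroup E] [NormedSpace ℝ E]
    [NormedAddCommGroup F] [NormedSpace ℝ F] (k : ℝ) (D : E →L[ℝ] F) :
    ‖k • D‖ ≤ |k| * ‖D‖ := by
  apply ContinuousLinearMap.opNorm_le_bound _ (by positivity)
  intro v
  have h : (k • D) v = k • D v := rfl
  rw [h, norm_smul, Real.norm_eq_abs, mul_assoc]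
  gcongr
  exact D.le_opNorm v

lemma support_fderiv_subset_of {E F : Type*} [NormedAddCommGroup E] [NormedSpace ℝ E]
    [NormedAddCommGroup F] [NormedSpace ℝ F] {f : E → F} {s : Set E}
    (hs : IsClosed s) (h : Function.support f ⊆ s) :
    Function.support (fderiv ℝ f) ⊆ s :=
  (support_fderiv_subset ℝ).trans (closure_minimal h hs)

end Aux

/-! ### Main bound, in terms of abstract clipped parameters -/

section Main

open Set InnerProductSpace

set_option maxHeartbeats 1000000 in
lemma main_bound {d : ℕ} (ψ : EuclideanSpace ℝ (Fin d) → ℝ)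
    (hψ : ContDiff ℝ (⊤ : ℕ∞) ψ) (hψc : HasCompactSupport ψ) :
    ∃ C > (0 : ℝ), ∀ (r a : ℝ) (b : EuclideanSpace ℝ (Fin d)) (k s0 : ℝ)
      (sc : Fin d → ℝ), 1 ≤ r → 1 / r ≤ |a| → |a| ≤ r → ‖b‖ ≤ r * Real.sqrt d →
      |k| ≤ 1 → |s0| ≤ r → (∀ i, |sc i| ≤ r) →
      H1sq (fun x => k * ψ (a • x + b)) +
        H1sq (fun x => s0 * ⟪x, gradient ψ (a • x + b)⟫) +
        H1sqV (fun x => diagCLM sc (gradient ψ (a • x + b)))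
        ≤ C * r ^ (d + 8) := by
  classical
  obtain ⟨R, hR0, hRK⟩ : ∃ R, 0 < R ∧ tsupport ψ ⊆ Metric.closedBall 0 R :=
    hψc.isBounded.subset_closedBall_lt 0 0
  -- the gradient of ψ and bounds
  have hG1 : ContDiff ℝ (⊤ : ℕ∞) (gradient ψ) := by
    have h1 : gradient ψ = fun y => (toDual ℝ (EuclideanSpace ℝ (Fin d))).symm
        (fderiv ℝ ψ y) := rfl
    rw [h1]
    exact (toDual ℝ (EuclideanSpace ℝ (Fin d))).symm.contDiff.comp
      (hψ.fderiv_right (by simp))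
  have hG1supp : ∀ y, y ∉ tsupport ψ → gradient ψ y = 0 := by
    intro y hy
    have h1 : fderiv ℝ ψ y = 0 := by
      by_contra h2
      exact hy (support_fderiv_subset ℝ h2)
    rw [gradient, h1, map_zero]
  have hG1c : HasCompactSupport (gradient ψ) := by
    apply hψc.of_isClosed_subset isClosed_closure
    apply closure_minimal _ hψc.isClosed
    intro y hy
    by_contra h
    exact hy (hG1supp y h)
  obtain ⟨M0, hM0⟩ := hψc.exists_bound_of_continuous hψ.continuous
  obtain ⟨M1, hM1⟩ := hG1c.exists_bound_of_continuous hG1.continuous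
  obtain ⟨M2, hM2⟩ := (hG1c.fderiv ℝ).exists_bound_of_continuous
    (hG1.continuous_fderiv (by simp))
  set M : ℝ := max M0 (max M1 (max M2 1)) with hMdef
  have hM0M : ∀ y, ‖ψ y‖ ≤ M := fun y => le_trans (hM0 y) (le_max_left _ _)
  have hM1M : ∀ y, ‖gradient ψ y‖ ≤ M := fun y =>
    le_trans (hM1 y) (le_trans (le_max_left _ _) (le_max_right _ _))
  have hM2M : ∀ y, ‖fderiv ℝ (gradient ψ) y‖ ≤ M := fun y =>
    le_trans (hM2 y) (le_trans (le_trans (le_max_left _ _) (le_max_right _ _))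
      (le_max_right _ _))
  have hM1' : (1 : ℝ) ≤ M :=
    le_trans (le_trans (le_max_right _ _) (le_max_right _ _)) (le_max_right _ _)
  have hfψM : ∀ y, ‖fderiv ℝ ψ y‖ ≤ M := by
    intro y
    have h1 : ‖gradient ψ y‖ = ‖fderiv ℝ ψ y‖ :=
      (toDual ℝ (EuclideanSpace ℝ (Fin d))).symm.norm_map _
    rw [← h1]; exact hM1M y
  set ρ0 : ℝ := R + Real.sqrt d with hρ0def
  have hρ0 : 0 < ρ0 := by
    have := Real.sqrt_nonneg (d : ℝ); rw [hρ0def]; linarith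
  set S : ℝ := (volume (tsupport ψ)).toReal with hSdef
  have hS0 : 0 ≤ S := ENNReal.toReal_nonneg
  refine ⟨6 * M ^ 2 * (1 + ρ0) ^ 2 * (S + 1), by positivity, ?_⟩
  intro r a b k s0 sc hr ha1 ha2 hb hk hs0 hsc
  have hr0 : (0 : ℝ) < r := lt_of_lt_of_le one_pos hr
  have h1r0 : (0 : ℝ) < 1 / r := by positivity
  have ha0 : a ≠ 0 := by
    intro h; rw [h, abs_zero] at ha1; linarith
  have haabs : 0 < |a| := lt_of_lt_of_le h1r0 ha1
  have hainv : |a|⁻¹ ≤ r := by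
    have h1 : |a|⁻¹ ≤ (1 / r)⁻¹ := by
      apply inv_anti₀ h1r0 ha1
    rwa [one_div, inv_inv] at h1
  -- notation
  set Aid : EuclideanSpace ℝ (Fin d) →L[ℝ] EuclideanSpace ℝ (Fin d) :=
    a • ContinuousLinearMap.id ℝ (EuclideanSpace ℝ (Fin d)) with hAiddef
  have hLd : ∀ x, HasFDerivAt (fun x : EuclideanSpace ℝ (Fin d) => a • x + b) Aid x :=
    fun x => ((hasFDerivAt_id x).const_smul a).add_const b
  have hLsm : ContDiff ℝ (⊤ : ℕ∞) (fun x : EuclideanSpace ℝ (Fin d) => a • x + b) :=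
    (contDiff_id.const_smul a).add contDiff_const
  have hLcont : Continuous (fun x : EuclideanSpace ℝ (Fin d) => a • x + b) :=
    hLsm.continuous
  have haid : ‖Aid‖ ≤ |a| := by
    apply ContinuousLinearMap.opNorm_le_bound _ (abs_nonneg a)
    intro v
    have h1 : Aid v = a • v := rfl
    rw [h1, norm_smul, Real.norm_eq_abs]
  set K' : Set (EuclideanSpace ℝ (Fin d)) :=
    (fun x => a • x + b) ⁻¹' tsupport ψ with hK'def
  have hvol : (volume K').toReal ≤ r ^ d * S := by
    rw [hK'def, volume_preimage_affine ha0, ENNReal.toReal_mul,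
      ENNReal.toReal_ofReal (by positivity)]
    exact mul_le_mul_of_nonneg_right (pow_le_pow_left₀ (by positivity) hainv d)
      ENNReal.toReal_nonneg
  have hxK' : ∀ x ∈ K', ‖x‖ ≤ ρ0 * r ^ 2 := by
    intro x hx
    have hmem : a • x + b ∈ tsupport ψ := hx
    have hLx : ‖a • x + b‖ ≤ R := by
      have := hRK hmem
      simpa [Metric.mem_closedBall, dist_zero_right] using this
    have h1 : ‖x‖ = |a|⁻¹ * ‖a • x‖ := by
      rw [norm_smul, Real.norm_eq_abs]
      field_simp
    have h2 : ‖a • x‖ ≤ ‖a • x + b‖ + ‖b‖ := by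
      have h3 := norm_sub_le (a • x + b) b
      rwa [add_sub_cancel_right] at h3
    have h4 : ‖a • x + b‖ + ‖b‖ ≤ R + r * Real.sqrt d := by linarith
    calc ‖x‖ = |a|⁻¹ * ‖a • x‖ := h1
      _ ≤ r * (R + r * Real.sqrt d) := by
          apply mul_le_mul hainv (le_trans h2 h4) (norm_nonneg _) (by linarith)
      _ ≤ ρ0 * r ^ 2 := by
          rw [hρ0def]
          nlinarith [Real.sqrt_nonneg (d : ℝ),
            mul_nonneg (mul_nonneg (sub_nonneg.2 hr) hr0.le) hR0.le]
  have hK'cl : IsClosed K' := (isClosed_tsupport ψ).preimage hLcont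
  have hK'cpt : IsCompact K' := by
    apply (isCompact_closedBall (0 : EuclideanSpace ℝ (Fin d)) (ρ0 * r ^ 2)).of_isClosed_subset
      hK'cl
    intro x hx
    simpa [Metric.mem_closedBall, dist_zero_right] using hxK' x hx
  -- uniform bound used for all six terms
  set B : ℝ := M * (1 + ρ0) * r ^ 4 with hBdef
  have hr4 : (1 : ℝ) ≤ r ^ 4 := one_le_pow₀ hr
  have hB0 : 0 ≤ B := by positivity
  have hMnn : 0 ≤ M := le_trans zero_le_one hM1'
  have hr14 : r ≤ r ^ 4 := by
    nlinarith [pow_le_pow_right₀ hr (show 1 ≤ 4 by norm_num)]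
  have hr24 : r ^ 2 ≤ r ^ 4 := pow_le_pow_right₀ hr (by norm_num)
  have hr34 : r ^ 3 ≤ r ^ 4 := pow_le_pow_right₀ hr (by norm_num)
  have hkey0 : M * 1 ≤ M * r ^ 4 := mul_le_mul_of_nonneg_left hr4 hMnn
  have hkey1 : M * r ≤ M * r ^ 4 := mul_le_mul_of_nonneg_left hr14 hMnn
  have hkey2 : M * r ^ 2 ≤ M * r ^ 4 := mul_le_mul_of_nonneg_left hr24 hMnn
  have hkey3 : M * ρ0 * r ^ 3 ≤ M * ρ0 * r ^ 4 :=
    mul_le_mul_of_nonneg_left hr34 (mul_nonneg hMnn hρ0.le)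
  have hnn4 : 0 ≤ M * ρ0 * r ^ 4 :=
    mul_nonneg (mul_nonneg hMnn hρ0.le) (by positivity)
  have hnnMr4 : 0 ≤ M * r ^ 4 := mul_nonneg hMnn (by positivity)
  -- the three functions
  set u1 : EuclideanSpace ℝ (Fin d) → ℝ := fun x => k * ψ (a • x + b) with hu1
  set u2 : EuclideanSpace ℝ (Fin d) → ℝ :=
    fun x => s0 * ⟪x, gradient ψ (a • x + b)⟫ with hu2
  set u3 : EuclideanSpace ℝ (Fin d) → EuclideanSpace ℝ (Fin d) :=
    fun x => diagCLM sc (gradient ψ (a • x + b)) with hu3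
  -- smoothness
  have hu1sm : ContDiff ℝ (⊤ : ℕ∞) u1 := contDiff_const.mul (hψ.comp hLsm)
  have hid : ContDiff ℝ (⊤ : ℕ∞) (fun x : EuclideanSpace ℝ (Fin d) => x) := contDiff_id
  have hu2sm : ContDiff ℝ (⊤ : ℕ∞) u2 := contDiff_const.mul (hid.inner ℝ (hG1.comp hLsm))
  have hu3sm : ContDiff ℝ (⊤ : ℕ∞) u3 := (diagCLM sc).contDiff.comp (hG1.comp hLsm)
  -- supports
  have hsup1 : Function.support u1 ⊆ K' := by
    intro x hx
    by_contra hxK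
    apply hx
    rw [hu1]
    have : ψ (a • x + b) = 0 := image_eq_zero_of_notMem_tsupport hxK
    simp [this]
  have hsup2 : Function.support u2 ⊆ K' := by
    intro x hx
    by_contra hxK
    apply hx
    rw [hu2]
    have : gradient ψ (a • x + b) = 0 := hG1supp _ hxK
    simp [this]
  have hsup3 : Function.support u3 ⊆ K' := by
    intro x hx
    by_contra hxK
    apply hx
    rw [hu3]
    have : gradient ψ (a • x + b) = 0 := hG1supp _ hxK
    simp only [this, map_zero]
  -- derivatives
  have hGLd : ∀ x, HasFDerivAt (fun x => gradient ψ (a • x + b))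
      ((fderiv ℝ (gradient ψ) (a • x + b)).comp Aid) x := fun x =>
    ((hG1.differentiable (by simp) _).hasFDerivAt).comp x (hLd x)
  have hu1d : ∀ x, HasFDerivAt u1
      (k • ((fderiv ℝ ψ (a • x + b)).comp Aid)) x := fun x =>
    (((hψ.differentiable (by simp) _).hasFDerivAt).comp x (hLd x)).const_mul k
  have hu2d : ∀ x, HasFDerivAt u2
      (s0 • ((fderivInnerCLM ℝ (x, gradient ψ (a • x + b))).comp
        ((ContinuousLinearMap.id ℝ (EuclideanSpace ℝ (Fin d))).prod
          ((fderiv ℝ (gradient ψ) (a • x + b)).comp Aid)))) x := fun x =>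
    (((hasFDerivAt_id x).inner ℝ (hGLd x))).const_mul s0
  have hu3d : ∀ x, HasFDerivAt u3
      ((diagCLM sc).comp ((fderiv ℝ (gradient ψ) (a • x + b)).comp Aid)) x := fun x =>
    ((diagCLM sc).hasFDerivAt).comp x (hGLd x)
  -- pointwise bounds
  have hBu1 : ∀ x ∈ K', ‖u1 x‖ ≤ B := by
    intro x _
    rw [hu1]
    calc ‖k * ψ (a • x + b)‖ = |k| * ‖ψ (a • x + b)‖ := by
          rw [norm_mul, Real.norm_eq_abs]
      _ ≤ 1 * M := mul_le_mul hk (hM0M _) (norm_nonneg _) one_pos.le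
      _ ≤ B := by rw [hBdef]; nlinarith [hkey0, hkey1, hkey2, hkey3, hnn4, hnnMr4]
  have hBu1' : ∀ x ∈ K', ‖fderiv ℝ u1 x‖ ≤ B := by
    intro x _
    rw [(hu1d x).fderiv]
    calc ‖k • ((fderiv ℝ ψ (a • x + b)).comp Aid)‖
        ≤ |k| * ‖(fderiv ℝ ψ (a • x + b)).comp Aid‖ := smul_clm_norm_le _ _
      _ ≤ 1 * (M * r) := by
          apply mul_le_mul hk _ (norm_nonneg _) one_pos.le
          calc ‖(fderiv ℝ ψ (a • x + b)).comp Aid‖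
              ≤ ‖fderiv ℝ ψ (a • x + b)‖ * ‖Aid‖ :=
                ContinuousLinearMap.opNorm_comp_le _ _
            _ ≤ M * r := mul_le_mul (hfψM _) (le_trans haid ha2) (norm_nonneg _)
                (by linarith)
      _ ≤ B := by rw [hBdef]; nlinarith [hkey0, hkey1, hkey2, hkey3, hnn4, hnnMr4]
  have hBu2 : ∀ x ∈ K', ‖u2 x‖ ≤ B := by
    intro x hx
    rw [hu2]
    calc ‖s0 * ⟪x, gradient ψ (a • x + b)⟫‖
        = |s0| * ‖⟪x, gradient ψ (a • x + b)⟫‖ := by rw [norm_mul, Real.norm_eq_abs]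
      _ ≤ r * (‖x‖ * ‖gradient ψ (a • x + b)‖) :=
          mul_le_mul hs0 (norm_inner_le_norm _ _) (norm_nonneg _) (by linarith)
      _ ≤ r * (ρ0 * r ^ 2 * M) := by
          apply mul_le_mul_of_nonneg_left _ (by linarith)
          exact mul_le_mul (hxK' x hx) (hM1M _) (norm_nonneg _) (by positivity)
      _ ≤ B := by rw [hBdef]; nlinarith [hkey0, hkey1, hkey2, hkey3, hnn4, hnnMr4]
  have hBu2' : ∀ x ∈ K', ‖fderiv ℝ u2 x‖ ≤ B := by
    intro x hx
    rw [(hu2d x).fderiv]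
    have hDle : ‖(fderiv ℝ (gradient ψ) (a • x + b)).comp Aid‖ ≤ M * r :=
      le_trans (ContinuousLinearMap.opNorm_comp_le _ _)
        (mul_le_mul (hM2M _) (le_trans haid ha2) (norm_nonneg _) (by linarith))
    have hin : ‖(fderivInnerCLM ℝ (x, gradient ψ (a • x + b))).comp
        ((ContinuousLinearMap.id ℝ (EuclideanSpace ℝ (Fin d))).prod
          ((fderiv ℝ (gradient ψ) (a • x + b)).comp Aid))‖
        ≤ ‖x‖ * (M * r) + M := by
      apply ContinuousLinearMap.opNorm_le_bound _ (by positivity)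
      intro v
      rw [ContinuousLinearMap.comp_apply]
      have h1 : ((ContinuousLinearMap.id ℝ (EuclideanSpace ℝ (Fin d))).prod
          ((fderiv ℝ (gradient ψ) (a • x + b)).comp Aid)) v
          = (v, ((fderiv ℝ (gradient ψ) (a • x + b)).comp Aid) v) := rfl
      rw [h1, fderivInnerCLM_apply]
      have hv1 : ‖⟪x, ((fderiv ℝ (gradient ψ) (a • x + b)).comp Aid) v⟫‖
          ≤ ‖x‖ * ((M * r) * ‖v‖) := by
        refine le_trans (norm_inner_le_norm _ _) ?_
        gcongr
        exact le_trans (ContinuousLinearMap.le_opNorm _ _)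
          (mul_le_mul_of_nonneg_right hDle (norm_nonneg _))
      have hv2 : ‖⟪v, gradient ψ (a • x + b)⟫‖ ≤ ‖v‖ * M := by
        refine le_trans (norm_inner_le_norm _ _) ?_
        exact mul_le_mul_of_nonneg_left (hM1M _) (norm_nonneg _)
      calc ‖⟪x, ((fderiv ℝ (gradient ψ) (a • x + b)).comp Aid) v⟫ +
            ⟪v, gradient ψ (a • x + b)⟫‖
          ≤ ‖⟪x, ((fderiv ℝ (gradient ψ) (a • x + b)).comp Aid) v⟫‖ +
            ‖⟪v, gradient ψ (a • x + b)⟫‖ := norm_add_le _ _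
        _ ≤ ‖x‖ * ((M * r) * ‖v‖) + ‖v‖ * M := add_le_add hv1 hv2
        _ = (‖x‖ * (M * r) + M) * ‖v‖ := by ring
    have hout : ‖x‖ * (M * r) + M ≤ ρ0 * r ^ 2 * (M * r) + M := by
      have hMr : 0 ≤ M * r := by positivity
      have := hxK' x hx
      nlinarith
    calc ‖s0 • ((fderivInnerCLM ℝ (x, gradient ψ (a • x + b))).comp
          ((ContinuousLinearMap.id ℝ (EuclideanSpace ℝ (Fin d))).prod
            ((fderiv ℝ (gradient ψ) (a • x + b)).comp Aid)))‖
        ≤ |s0| * ‖(fderivInnerCLM ℝ (x, gradient ψ (a • x + b))).comp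
          ((ContinuousLinearMap.id ℝ (EuclideanSpace ℝ (Fin d))).prod
            ((fderiv ℝ (gradient ψ) (a • x + b)).comp Aid))‖ := smul_clm_norm_le _ _
      _ ≤ r * (ρ0 * r ^ 2 * (M * r) + M) := by
          apply mul_le_mul hs0 (le_trans hin hout) _ (by linarith)
          positivity
      _ ≤ B := by rw [hBdef]; nlinarith [hkey0, hkey1, hkey2, hkey3, hnn4, hnnMr4]
  have hBu3 : ∀ x ∈ K', ‖u3 x‖ ≤ B := by
    intro x _
    rw [hu3]
    calc ‖diagCLM sc (gradient ψ (a • x + b))‖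
        ≤ ‖diagCLM sc‖ * ‖gradient ψ (a • x + b)‖ := ContinuousLinearMap.le_opNorm _ _
      _ ≤ r * M := mul_le_mul (diagCLM_norm_le (by linarith) hsc) (hM1M _)
          (norm_nonneg _) (by linarith)
      _ ≤ B := by rw [hBdef]; nlinarith [hkey0, hkey1, hkey2, hkey3, hnn4, hnnMr4]
  have hBu3' : ∀ x ∈ K', ‖fderiv ℝ u3 x‖ ≤ B := by
    intro x _
    rw [(hu3d x).fderiv]
    calc ‖(diagCLM sc).comp ((fderiv ℝ (gradient ψ) (a • x + b)).comp Aid)‖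
        ≤ ‖diagCLM sc‖ * ‖(fderiv ℝ (gradient ψ) (a • x + b)).comp Aid‖ :=
          ContinuousLinearMap.opNorm_comp_le _ _
      _ ≤ r * (M * r) := by
          apply mul_le_mul (diagCLM_norm_le (by linarith) hsc) _ (norm_nonneg _)
            (by linarith)
          exact le_trans (ContinuousLinearMap.opNorm_comp_le _ _)
            (mul_le_mul (hM2M _) (le_trans haid ha2) (norm_nonneg _) (by linarith))
      _ ≤ B := by rw [hBdef]; nlinarith [hkey0, hkey1, hkey2, hkey3, hnn4, hnnMr4]
  -- integral bounds
  have hI1 : ∫ x, (u1 x) ^ 2 ≤ B ^ 2 * (volume K').toReal := by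
    have := integral_sq_le_aux hu1sm.continuous hK'cpt hsup1 hBu1
    simpa [Real.norm_eq_abs, sq_abs] using this
  have hI2 : ∫ x, ‖fderiv ℝ u1 x‖ ^ 2 ≤ B ^ 2 * (volume K').toReal :=
    integral_sq_le_aux (hu1sm.continuous_fderiv (by simp)) hK'cpt
      (support_fderiv_subset_of hK'cl hsup1) hBu1'
  have hI3 : ∫ x, (u2 x) ^ 2 ≤ B ^ 2 * (volume K').toReal := by
    have := integral_sq_le_aux hu2sm.continuous hK'cpt hsup2 hBu2
    simpa [Real.norm_eq_abs, sq_abs] using this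
  have hI4 : ∫ x, ‖fderiv ℝ u2 x‖ ^ 2 ≤ B ^ 2 * (volume K').toReal :=
    integral_sq_le_aux (hu2sm.continuous_fderiv (by simp)) hK'cpt
      (support_fderiv_subset_of hK'cl hsup2) hBu2'
  have hI5 : ∫ x, ‖u3 x‖ ^ 2 ≤ B ^ 2 * (volume K').toReal :=
    integral_sq_le_aux hu3sm.continuous hK'cpt hsup3 hBu3
  have hI6 : ∫ x, ‖fderiv ℝ u3 x‖ ^ 2 ≤ B ^ 2 * (volume K').toReal :=
    integral_sq_le_aux (hu3sm.continuous_fderiv (by simp)) hK'cpt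
      (support_fderiv_subset_of hK'cl hsup3) hBu3'
  -- assemble
  have hsum : H1sq u1 + H1sq u2 + H1sqV u3 ≤ 6 * (B ^ 2 * (volume K').toReal) := by
    rw [H1sq, H1sq, H1sqV]
    linarith
  calc H1sq u1 + H1sq u2 + H1sqV u3 ≤ 6 * (B ^ 2 * (volume K').toReal) := hsum
    _ ≤ 6 * (B ^ 2 * (r ^ d * S)) := by gcongr
    _ = 6 * M ^ 2 * (1 + ρ0) ^ 2 * S * r ^ (d + 8) := by
        rw [hBdef, pow_add]; ring
    _ ≤ 6 * M ^ 2 * (1 + ρ0) ^ 2 * (S + 1) * r ^ (d + 8) := by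
        gcongr
        linarith

end Main

/-- `H¹(ℝᵈ)` bound on the parameter-gradient of a clipped neuron:
`‖X^r‖²_{H¹} ≤ C_ψ r^{d+8}`. -/
theorem clipped_neuron_gradient_H1_bound {d : ℕ}
    (ψ : EuclideanSpace ℝ (Fin d) → ℝ)
    (hψ : ContDiff ℝ (⊤ : ℕ∞) ψ) (hψc : HasCompactSupport ψ) :
    ∃ C > (0 : ℝ), ∀ (r β α : ℝ) (c : EuclideanSpace ℝ (Fin d)), 1 ≤ r →
      H1sq (Xbeta ψ r β α c) + H1sq (Xalpha ψ r β α c) + H1sqV (Xc ψ r β α c)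
        ≤ C * r ^ (d + 8) := by
  obtain ⟨C, hC, hmain⟩ := main_bound ψ hψ hψc
  refine ⟨C, hC, ?_⟩
  intro r β α c hr
  have hr0 : (0 : ℝ) < r := lt_of_lt_of_le one_pos hr
  obtain ⟨ha1, ha2⟩ := clipA_abs (a := α) hr
  have hb := norm_clipC_le hr0.le c
  have hk : |(if |β| ≤ r then (1 : ℝ) else 0)| ≤ 1 := by
    split_ifs <;> simp
  have hs0 : |(if 1 / r ≤ |α| ∧ |α| ≤ r then (1 : ℝ) else 0) * clip r β| ≤ r := by
    rw [abs_mul]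
    calc |(if 1 / r ≤ |α| ∧ |α| ≤ r then (1 : ℝ) else 0)| * |clip r β|
        ≤ 1 * r := by
          apply mul_le_mul _ (abs_clip_le hr0.le) (abs_nonneg _) one_pos.le
          split_ifs <;> simp
      _ = r := one_mul r
  have hsc : ∀ i, |(if |c i| ≤ r then (1 : ℝ) else 0) * clip r β| ≤ r := by
    intro i
    rw [abs_mul]
    calc |(if |c i| ≤ r then (1 : ℝ) else 0)| * |clip r β| ≤ 1 * r := by
          apply mul_le_mul _ (abs_clip_le hr0.le) (abs_nonneg _) one_pos.le
          split_ifs <;> simp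
      _ = r := one_mul r
  have h := hmain r (clipA r α) (clipC r c)
    (if |β| ≤ r then (1 : ℝ) else 0)
    ((if 1 / r ≤ |α| ∧ |α| ≤ r then (1 : ℝ) else 0) * clip r β)
    (fun i => (if |c i| ≤ r then (1 : ℝ) else 0) * clip r β)
    hr ha1 ha2 hb hk hs0 hsc
  have e1 : Xbeta ψ r β α c = fun x => (if |β| ≤ r then (1 : ℝ) else 0) *
      ψ (clipA r α • x + clipC r c) := rfl
  have e2 : Xalpha ψ r β α c = fun x =>
      ((if 1 / r ≤ |α| ∧ |α| ≤ r then (1 : ℝ) else 0) * clip r β) *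
        ⟪x, gradient ψ (clipA r α • x + clipC r c)⟫ := rfl
  have e3 : Xc ψ r β α c = fun x =>
      diagCLM (fun i => (if |c i| ≤ r then (1 : ℝ) else 0) * clip r β)
        (gradient ψ (clipA r α • x + clipC r c)) := by
    funext x
    ext i
    rfl
  rw [e1, e2, e3]
  exact h
end
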